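/- Under the hypotheses of the regular definite canonical system with boundary conditions α at a and β at b: for z not an eigenvalue of S^{α,β}, there exists a unique matrix m(z) ∈ ℂ^{n×n} such that the solution f_m(x,z) = v(x,z) + u(x,z)m(z) satisfies β f_m(b,z) = 0, namely m(z) = -(β u(b,z))^{-1} β v(b,z), where u,v are the solutions with u(a,z) = -Jα*, v(a,z) = α*. -/
import Mathlib


open MeasureTheory Matrix Set
open scoped ComplexOrder

/-- The canonical symplectic matrix `J = [[0, -I],[I, 0]]` of size `2n`. -/
noncomputable def Jmat (n : ℕ) : Matrix (Fin n ⊕ Fin n) (Fin n ⊕ Fin n) ℂ :=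
  Matrix.fromBlocks 0 (-1) 1 0

/-- For a regular definite canonical system with boundary conditions `α, β`, if `z`
is not an eigenvalue of `S^{α,β}` (equivalently, `β u(b,z)` is invertible), then
there is a unique matrix `m(z)` such that `f_m = v + u m(z)` satisfies the boundary
condition `β` at `b`, namely `m(z) = -(β u(b,z))⁻¹ β v(b,z)`. -/
theorem m_function_exists_unique (n : ℕ) (a b : ℝ) (hab : a < b)
    (H : ℝ → Matrix (Fin n ⊕ Fin n) (Fin n ⊕ Fin n) ℂ)
    (hHint : ∀ i j, IntervalIntegrable (fun x => H x i j) volume a b)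
    (hpsd : ∀ᵐ x ∂(volume.restrict (Icc a b)), (H x).PosSemidef)
    (hdef : ∀ w : (Fin n ⊕ Fin n) → ℂ,
      (∀ᵐ x ∂(volume.restrict (Icc a b)), H x *ᵥ w = 0) → w = 0)
    (α β : Matrix (Fin n) (Fin n ⊕ Fin n) ℂ)
    (hα1 : α * αᴴ = 1) (hα2 : α * Jmat n * αᴴ = 0)
    (hβ1 : β * βᴴ = 1) (hβ2 : β * Jmat n * βᴴ = 0)
    (z : ℂ)
    (u u' v v' : ℝ → Matrix (Fin n ⊕ Fin n) (Fin n) ℂ)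
    (hu'int : ∀ i j, IntervalIntegrable (fun t => u' t i j) volume a b)
    (huAC : ∀ x ∈ Icc a b, ∀ i j, u x i j = u a i j + ∫ t in a..x, u' t i j)
    (huODE : ∀ᵐ x ∂(volume.restrict (Icc a b)), Jmat n * u' x = -(z • (H x * u x)))
    (hua : u a = -(Jmat n * αᴴ))
    (hv'int : ∀ i j, IntervalIntegrable (fun t => v' t i j) volume a b)
    (hvAC : ∀ x ∈ Icc a b, ∀ i j, v x i j = v a i j + ∫ t in a..x, v' t i j)
    (hvODE : ∀ᵐ x ∂(volume.restrict (Icc a b)), Jmat n * v' x = -(z • (H x * v x)))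
    (hva : v a = αᴴ)
    (hUnit : IsUnit (β * u b)) :
    β * (v b + u b * (-((β * u b)⁻¹ * (β * v b)))) = 0 ∧
      ∀ m : Matrix (Fin n) (Fin n) ℂ,
        β * (v b + u b * m) = 0 → m = -((β * u b)⁻¹ * (β * v b)) := by
  set A := β * u b with hA
  have hdet : IsUnit A.det := (Matrix.isUnit_iff_isUnit_det A).mp hUnit
  have hAA : A * A⁻¹ = 1 := Matrix.mul_nonsing_inv A hdet
  have hAAl : A⁻¹ * A = 1 := Matrix.nonsing_inv_mul A hdet
  constructor
  · rw [Matrix.mul_add, ← Matrix.mul_assoc, ← hA, Matrix.mul_neg,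
      ← Matrix.mul_assoc, hAA, Matrix.one_mul, add_neg_cancel]
  · intro m hm
    rw [Matrix.mul_add, ← Matrix.mul_assoc, ← hA] at hm
    have h2 : A * m = -(β * v b) := by
      rw [eq_neg_iff_add_eq_zero, add_comm]; exact hm
    have h3 := congrArg (fun M => A⁻¹ * M) h2
    simpa [← Matrix.mul_assoc, hAAl] using h3
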